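/- arXiv:1901.08488 — 6 statements merged into one kernel-verified Lean document; each statement's English description precedes it below -/
import Mathlib

section
/- Let ε > 0 and let x₀, y₁, x₁, y₂, ..., xₙ, yₙ₊₁ = x₀ be a closed walk of odd length 2n+1 in the Borsuk graph Bor^d(ε) (i.e., consecutive points have Euclidean distance > 2 - ε). Then 2n + 1 ≥ 1/√ε. Equivalently, every odd cycle in Bor^d(ε) has length greater than 1/√ε. -/
/-- Every closed walk of odd length `2n+1` in the Borsuk graph `Bor^d(ε)`
(points of the unit sphere, adjacent when at Euclidean distance `> 2 - ε`)
has length at least `1/√ε`. -/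
theorem stmt_2 (d n : ℕ) (ε : ℝ) (hε : 0 < ε)
    (p : ℕ → EuclideanSpace ℝ (Fin (d + 1)))
    (hsphere : ∀ i ≤ 2 * n + 1, ‖p i‖ = 1)
    (hclosed : p (2 * n + 1) = p 0)
    (hedges : ∀ i < 2 * n + 1, ‖p i - p (i + 1)‖ > 2 - ε) :
    (2 * n + 1 : ℝ) ≥ 1 / Real.sqrt ε := by
  rcases le_or_gt 1 ε with h1 | h1
  · have hs : (1:ℝ) ≤ Real.sqrt ε := by
      rw [show (1:ℝ) = Real.sqrt 1 by simp]
      exact Real.sqrt_le_sqrt h1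
    have : 1 / Real.sqrt ε ≤ 1 := by
      rw [div_le_one (by linarith)]; exact hs
    have h2 : (1:ℝ) ≤ 2 * n + 1 := by
      have := Nat.cast_nonneg (α := ℝ) n
      linarith
    linarith
  -- main case ε < 1
  have hsε : 0 < Real.sqrt ε := Real.sqrt_pos.mpr hε
  -- step bound: ‖p (i+1) + p i‖ ≤ 2 √ε
  have hstep : ∀ i < 2 * n + 1, ‖p (i + 1) + p i‖ ≤ 2 * Real.sqrt ε := by
    intro i hi
    have hni : ‖p i‖ = 1 := hsphere i (by omega)
    have hni1 : ‖p (i + 1)‖ = 1 := hsphere (i + 1) (by omega)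
    have hd := hedges i hi
    have hdsq : (2 - ε)^2 < ‖p i - p (i + 1)‖^2 := by
      apply sq_lt_sq' _ hd
      have : (0:ℝ) ≤ ‖p i - p (i + 1)‖ := norm_nonneg _
      linarith
    have hpar : ‖p i + p (i+1)‖^2 + ‖p i - p (i+1)‖^2 = 4 := by
      have h1 := norm_add_sq_real (p i) (p (i+1))
      have h2 := norm_sub_sq_real (p i) (p (i+1))
      rw [hni, hni1] at h1 h2
      linarith
    have hsum : ‖p i + p (i+1)‖^2 ≤ 4 * ε := by nlinarith
    have h4 : Real.sqrt (4 * ε) = 2 * Real.sqrt ε := by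
      rw [show (4:ℝ) * ε = 2^2 * ε by ring, Real.sqrt_mul (by positivity),
        Real.sqrt_sq (by norm_num)]
    calc ‖p (i+1) + p i‖ = Real.sqrt (‖p i + p (i+1)‖^2) := by
          rw [add_comm (p (i+1)) (p i)]
          exact (Real.sqrt_sq (norm_nonneg _)).symm
      _ ≤ Real.sqrt (4 * ε) := Real.sqrt_le_sqrt hsum
      _ = 2 * Real.sqrt ε := h4
  -- flipped walk
  set q : ℕ → EuclideanSpace ℝ (Fin (d+1)) := fun i => ((-1:ℝ)^i) • p i with hq
  have hqstep : ∀ i < 2 * n + 1, dist (q i) (q (i+1)) ≤ 2 * Real.sqrt ε := by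
    intro i hi
    have heq : q i - q (i+1) = ((-1:ℝ)^i) • (p i + p (i+1)) := by
      simp only [hq, pow_succ]
      module
    rw [dist_eq_norm, heq, norm_smul]
    simp only [norm_pow, norm_neg, norm_one, one_pow, one_mul]
    rw [add_comm (p i)]
    exact hstep i hi
  have htel := dist_le_range_sum_dist q (2 * n + 1)
  have hbound : (∑ i ∈ Finset.range (2 * n + 1), dist (q i) (q (i+1)))
      ≤ (2 * n + 1) * (2 * Real.sqrt ε) := by
    calc (∑ i ∈ Finset.range (2 * n + 1), dist (q i) (q (i+1)))
        ≤ ∑ i ∈ Finset.range (2 * n + 1), (2 * Real.sqrt ε) := by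
          apply Finset.sum_le_sum
          intro i hi
          exact hqstep i (Finset.mem_range.mp hi)
      _ = (2 * n + 1) * (2 * Real.sqrt ε) := by
          rw [Finset.sum_const, Finset.card_range]
          push_cast; ring
  have hdist : dist (q 0) (q (2 * n + 1)) = 2 := by
    have : q (2 * n + 1) = -p 0 := by
      simp [hq, hclosed, pow_succ, pow_mul]
    rw [dist_eq_norm, this, hq]
    simp only [pow_zero, one_smul, sub_neg_eq_add]
    have : p 0 + p 0 = (2:ℝ) • p 0 := by module
    rw [this, norm_smul, hsphere 0 (by omega)]
    norm_num
  have hkey : 2 ≤ (2 * (n:ℝ) + 1) * (2 * Real.sqrt ε) := by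
    rw [hdist] at htel
    push_cast at hbound ⊢
    linarith
  rw [ge_iff_le, div_le_iff₀ hsε]
  nlinarith
end

section
/- For each d ≥ 1 there exists a constant λ_d < 2 such that for all 0 < r < 2 - λ_d, the Borsuk graph Bor^d(r) admits a proper coloring with d + 2 colors. Concretely, λ_d is the maximum diameter of the radial projection to S^d of a facet of the regular (d+1)-simplex inscribed in S^d, and the coloring assigns to each point of S^d the index of a facet whose radial projection contains it. -/
open Finset in
lemma sum_sq_eq_one' {n : ℕ} (x : EuclideanSpace ℝ (Fin n)) (hx : ‖x‖ = 1) :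
    ∑ i, x i ^ 2 = 1 := by
  have h := congrArg (· ^ 2) hx
  simp only [EuclideanSpace.norm_eq] at h
  rw [Real.sq_sqrt (by positivity)] at h
  simpa [Real.norm_eq_abs, sq_abs] using h

set_option maxHeartbeats 1600000 in
/-- For each `d ≥ 1` there is a constant `λ_d < 2` (the maximum diameter of the
radial projection to `S^d` of a facet of the regular `(d+1)`-simplex inscribed
in `S^d`) such that for all `0 < r < 2 - λ_d` the Borsuk graph `Bor^d(r)` has a
proper coloring with `d + 2` colors: a map to `Fin (d+2)` giving distinct
values to any two points of the sphere at distance `> 2 - r`. -/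
theorem stmt_4 (d : ℕ) (hd : 1 ≤ d) :
    ∃ lam : ℝ, lam < 2 ∧
      ∀ r : ℝ, 0 < r → r < 2 - lam →
        ∃ c : EuclideanSpace ℝ (Fin (d + 1)) → Fin (d + 2),
          ∀ x y : EuclideanSpace ℝ (Fin (d + 1)),
            ‖x‖ = 1 → ‖y‖ = 1 → ‖x - y‖ > 2 - r → c x ≠ c y := by
  classical
  have hd1 : (1 : ℝ) ≤ d := by exact_mod_cast hd
  obtain ⟨t, ht0, ht1, htd⟩ :
      ∃ t : ℝ, 0 < t ∧ t ≤ 1 / 16 ∧ t * (2 * (d + 1)) = 1 / 4 := by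
    refine ⟨1 / (8 * (d + 1)), by positivity, ?_, ?_⟩
    · rw [div_le_div_iff₀ (by positivity) (by norm_num)]; nlinarith
    · field_simp; ring
  refine ⟨Real.sqrt (4 - 4 * t ^ 2), ?_, ?_⟩
  · have h4 : 4 - 4 * t ^ 2 < 4 := by nlinarith
    calc Real.sqrt (4 - 4 * t ^ 2) < Real.sqrt 4 := Real.sqrt_lt_sqrt (by nlinarith) h4
      _ = 2 := by rw [show (4 : ℝ) = 2 ^ 2 by norm_num, Real.sqrt_sq (by norm_num)]
  · intro r hr hr2
    refine ⟨fun x => if h : ∃ i : Fin (d + 1), t ≤ x i then (h.choose).castSucc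
      else Fin.last (d + 1), ?_⟩
    intro x y hx hy hxy hc
    simp only at hc
    have hxs : ∑ i, x i ^ 2 = 1 := sum_sq_eq_one' x hx
    have hys : ∑ i, y i ^ 2 = 1 := sum_sq_eq_one' y hy
    have hS : (2 : ℝ) * t ^ 2 - 1 ≤ ∑ i, x i * y i := by
      by_cases h1 : ∃ i : Fin (d + 1), t ≤ x i
      · by_cases h2 : ∃ i : Fin (d + 1), t ≤ y i
        · rw [dif_pos h1, dif_pos h2] at hc
          have hij : h1.choose = h2.choose := Fin.castSucc_injective _ hc
          set i := h1.choose with hi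
          have hxi : t ≤ x i := h1.choose_spec
          have hyi : t ≤ y i := hij ▸ h2.choose_spec
          have hsingle : (x i + y i) ^ 2 ≤ ∑ j, (x j + y j) ^ 2 :=
            Finset.single_le_sum (f := fun j => (x j + y j) ^ 2)
              (fun j _ => sq_nonneg _) (Finset.mem_univ i)
          have hexp : ∑ j, (x j + y j) ^ 2
              = (∑ j, x j ^ 2) + 2 * (∑ j, x j * y j) + ∑ j, y j ^ 2 := by
            rw [Finset.mul_sum, ← Finset.sum_add_distrib, ← Finset.sum_add_distrib]
            exact Finset.sum_congr rfl (fun j _ => by ring)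
          rw [hexp, hxs, hys] at hsingle
          nlinarith
        · rw [dif_pos h1, dif_neg h2] at hc
          exact absurd hc (Fin.ne_of_lt (Fin.castSucc_lt_last _))
      · by_cases h2 : ∃ i : Fin (d + 1), t ≤ y i
        · rw [dif_neg h1, dif_pos h2] at hc
          exact absurd hc.symm (Fin.ne_of_lt (Fin.castSucc_lt_last _))
        · push_neg at h1 h2
          have habsx : ∀ j, |x j| ≤ 1 := by
            intro j
            have : x j ^ 2 ≤ 1 := by
              rw [← hxs]
              exact Finset.single_le_sum (f := fun k => x k ^ 2)
                (fun k _ => sq_nonneg _) (Finset.mem_univ j)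
            nlinarith [abs_nonneg (x j), sq_abs (x j)]
          have habsy : ∀ j, |y j| ≤ 1 := by
            intro j
            have : y j ^ 2 ≤ 1 := by
              rw [← hys]
              exact Finset.single_le_sum (f := fun k => y k ^ 2)
                (fun k _ => sq_nonneg _) (Finset.mem_univ j)
            nlinarith [abs_nonneg (y j), sq_abs (y j)]
          have hterm : ∀ j, -(t * (|x j| + |y j|)) ≤ x j * y j := by
            intro j
            have hxj := (h1 j).le
            have hyj := (h2 j).le
            rcases le_or_gt 0 (x j) with hax | hax <;> rcases le_or_gt 0 (y j) with hay | hay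
            · have h1' : |x j| = x j := abs_of_nonneg hax
              have h2' : |y j| = y j := abs_of_nonneg hay
              nlinarith [mul_nonneg hax hay]
            · rw [abs_of_nonneg hax, abs_of_neg hay]; nlinarith
            · rw [abs_of_neg hax, abs_of_nonneg hay]; nlinarith
            · rw [abs_of_neg hax, abs_of_neg hay]
              nlinarith [mul_pos (neg_pos.2 hax) (neg_pos.2 hay)]
          have hsum : ∑ j, -(t * (|x j| + |y j|)) ≤ ∑ j, x j * y j :=
            Finset.sum_le_sum (fun j _ => hterm j)
          have hbnd : ∑ j, (t * (|x j| + |y j|)) ≤ t * (2 * (d + 1)) := by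
            rw [← Finset.mul_sum]
            have hs2 : ∑ j, (|x j| + |y j|) ≤ ∑ _j : Fin (d + 1), (2 : ℝ) :=
              Finset.sum_le_sum (fun j _ => by
                have := habsx j; have := habsy j; linarith)
            have hc2 : ∑ _j : Fin (d + 1), (2 : ℝ) = 2 * (d + 1) := by
              rw [Finset.sum_const, Finset.card_univ, Fintype.card_fin, nsmul_eq_mul]
              push_cast; ring
            rw [hc2] at hs2
            exact mul_le_mul_of_nonneg_left hs2 ht0.le
          rw [Finset.sum_neg_distrib] at hsum
          have hS4 : -(1 / 4 : ℝ) ≤ ∑ j, x j * y j := by linarith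
          have ht2 : 2 * t ^ 2 ≤ 1 / 2 := by nlinarith
          linarith
    have hnorm : ‖x - y‖ ^ 2 = 2 - 2 * ∑ i, x i * y i := by
      have he : ‖x - y‖ = Real.sqrt (∑ i, (x i - y i) ^ 2) := by
        rw [EuclideanSpace.norm_eq]
        congr 1
        exact Finset.sum_congr rfl (fun j _ => by simp [Real.norm_eq_abs, sq_abs])
      rw [he, Real.sq_sqrt (by positivity)]
      have hexp2 : ∑ i, (x i - y i) ^ 2
          = (∑ i, x i ^ 2) - 2 * (∑ i, x i * y i) + ∑ i, y i ^ 2 := by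
        rw [Finset.mul_sum, ← Finset.sum_sub_distrib, ← Finset.sum_add_distrib]
        exact Finset.sum_congr rfl (fun j _ => by ring)
      rw [hexp2, hxs, hys]; ring
    have hle : ‖x - y‖ ≤ Real.sqrt (4 - 4 * t ^ 2) := by
      rw [show ‖x - y‖ = Real.sqrt (‖x - y‖ ^ 2) by
        rw [Real.sqrt_sq (norm_nonneg _)]]
      exact Real.sqrt_le_sqrt (by rw [hnorm]; nlinarith)
    linarith [hxy, hr2, hle]
end

section
/- Let N = (0,...,0,1) ∈ S^d, and for x ∈ S^d \ {N, -N} let γ_x(t) = ((sin t/√(1-x_d²))·x₀, ..., (sin t/√(1-x_d²))·x_{d-1}, cos t) for t ∈ [0, π] be the great semicircle from N to -N through x. If x, y ∈ S^d \ {N, -N} with ‖x - y‖ ≤ δ, and y' is the point on γ_y whose last coordinate equals x_d, then ‖x - y'‖ ≤ 2δ. -/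
/-!
Let `e` be the north pole and write `x = x_d e + u`, `y = y_d e + v` with `u, v ⟂ e`. On the
unit sphere `√(1 - x_d²) = ‖u‖` and `√(1 - y_d²) = ‖v‖`, so `x - y' = u - (‖u‖ / ‖v‖) v`.
Rescaling `v` to the length of `u` moves it by `|‖v‖ - ‖u‖| ≤ ‖u - v‖`, and `‖u - v‖ ≤ ‖x - y‖`
because the orthogonal projection onto `e^⟂` is 1-Lipschitz.
-/

open RealInnerProductSpace

theorem norm_sub_div_norm_smul_le {E : Type*} [NormedAddCommGroup E] [NormedSpace ℝ E]
    (u v : E) : ‖u - (‖u‖ / ‖v‖) • v‖ ≤ 2 * ‖u - v‖ := by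
  rcases eq_or_ne v 0 with rfl | hv
  · simp only [norm_zero, div_zero, zero_smul, sub_zero]
    linarith [norm_nonneg u]
  have hv_pos : 0 < ‖v‖ := norm_pos_iff.2 hv
  have hrescale : ‖v - (‖u‖ / ‖v‖) • v‖ = |‖v‖ - ‖u‖| := by
    have hcoef : (1 - ‖u‖ / ‖v‖) * ‖v‖ = ‖v‖ - ‖u‖ := by field_simp
    rw [← hcoef, abs_mul, abs_norm, ← Real.norm_eq_abs, ← norm_smul, sub_smul, one_smul]
  calc ‖u - (‖u‖ / ‖v‖) • v‖ = ‖(u - v) + (v - (‖u‖ / ‖v‖) • v)‖ := by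
        rw [sub_add_sub_cancel]
    _ ≤ ‖u - v‖ + ‖v - (‖u‖ / ‖v‖) • v‖ := norm_add_le _ _
    _ ≤ 2 * ‖u - v‖ := by
        rw [hrescale]
        linarith [abs_norm_sub_norm_le v u, norm_sub_rev v u]

section UnitVector

variable {E : Type*} [NormedAddCommGroup E] [InnerProductSpace ℝ E] {e : E}

theorem norm_sub_inner_smul_sq (he : ‖e‖ = 1) (x : E) :
    ‖x - ⟪e, x⟫ • e‖ ^ 2 = ‖x‖ ^ 2 - ⟪e, x⟫ ^ 2 := by
  rw [norm_sub_sq_real, inner_smul_right, real_inner_comm, norm_smul, he, Real.norm_eq_abs,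
    mul_one, sq_abs]
  ring

theorem norm_sub_inner_smul_le (he : ‖e‖ = 1) (x : E) : ‖x - ⟪e, x⟫ • e‖ ≤ ‖x‖ := by
  refine pow_le_pow_iff_left₀ (norm_nonneg _) (norm_nonneg _) two_ne_zero |>.1 ?_
  rw [norm_sub_inner_smul_sq he]
  linarith [sq_nonneg ⟪e, x⟫]

theorem norm_sub_inner_smul_eq_sqrt (he : ‖e‖ = 1) {x : E} (hx : ‖x‖ = 1) :
    ‖x - ⟪e, x⟫ • e‖ = √(1 - ⟪e, x⟫ ^ 2) := by
  have hsq := norm_sub_inner_smul_sq he x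
  rw [hx, one_pow] at hsq
  rw [← hsq, Real.sqrt_sq (norm_nonneg _)]

theorem norm_sub_meridian_point_le (he : ‖e‖ = 1) {x y : E} (hx : ‖x‖ = 1) (hy : ‖y‖ = 1) :
    ‖x - (⟪e, x⟫ • e + (√(1 - ⟪e, x⟫ ^ 2) / √(1 - ⟪e, y⟫ ^ 2)) • (y - ⟪e, y⟫ • e))‖
      ≤ 2 * ‖x - y‖ := by
  set u := x - ⟪e, x⟫ • e
  set v := y - ⟪e, y⟫ • e
  have huv : u - v = (x - y) - ⟪e, x - y⟫ • e := by
    simp only [u, v, inner_sub_right, sub_smul]; abel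
  calc ‖x - (⟪e, x⟫ • e + (√(1 - ⟪e, x⟫ ^ 2) / √(1 - ⟪e, y⟫ ^ 2)) • v)‖
        = ‖u - (‖u‖ / ‖v‖) • v‖ := by
          rw [norm_sub_inner_smul_eq_sqrt he hx, norm_sub_inner_smul_eq_sqrt he hy,
            sub_add_eq_sub_sub]
    _ ≤ 2 * ‖u - v‖ := norm_sub_div_norm_smul_le u v
    _ ≤ 2 * ‖x - y‖ := by
        rw [huv]
        gcongr
        exact norm_sub_inner_smul_le he _

end UnitVector

theorem stmt_15_general (d : ℕ) (δ : ℝ)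
    (x y y' : EuclideanSpace ℝ (Fin (d + 1)))
    (hx : ‖x‖ = 1) (hy : ‖y‖ = 1)
    (hxy : ‖x - y‖ ≤ δ)
    (hy' : ∀ i : Fin (d + 1), y' i =
      if i = Fin.last d then x (Fin.last d)
      else Real.sqrt (1 - x (Fin.last d) ^ 2) /
        Real.sqrt (1 - y (Fin.last d) ^ 2) * y i) :
    ‖x - y'‖ ≤ 2 * δ := by
  set e := EuclideanSpace.single (Fin.last d) (1 : ℝ)
  have he : ‖e‖ = 1 := by simp [e]
  have hy'_eq : y' = ⟪e, x⟫ • e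
      + (√(1 - ⟪e, x⟫ ^ 2) / √(1 - ⟪e, y⟫ ^ 2)) • (y - ⟪e, y⟫ • e) := by
    ext i
    by_cases hi : i = Fin.last d <;> simp [hy', hi, e, EuclideanSpace.inner_single_left]
  rw [hy'_eq]
  linarith [norm_sub_meridian_point_le he hx hy]

/-- Let `N` be the north pole of `S^d` and, for `y` distinct from `±N`, let
`γ_y` be the great semicircle from `N` to `-N` through `y`. If `x, y ∈ S^d`
are distinct from `±N`, `‖x - y‖ ≤ δ`, and `y'` is the point of `γ_y` whose
last coordinate equals that of `x` (explicitly `y'_i = (√(1-x_d²)/√(1-y_d²))·y_i`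
for `i < d` and `y'_d = x_d`), then `‖x - y'‖ ≤ 2δ`. -/
theorem stmt_15 (d : ℕ) (δ : ℝ)
    (x y y' : EuclideanSpace ℝ (Fin (d + 1)))
    (hx : ‖x‖ = 1) (hy : ‖y‖ = 1)
    (hxp : |x (Fin.last d)| ≠ 1) (hyp : |y (Fin.last d)| ≠ 1)
    (hxy : ‖x - y‖ ≤ δ)
    (hy' : ∀ i : Fin (d + 1), y' i =
      if i = Fin.last d then x (Fin.last d)
      else Real.sqrt (1 - x (Fin.last d) ^ 2) /
        Real.sqrt (1 - y (Fin.last d) ^ 2) * y i) :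
    ‖x - y'‖ ≤ 2 * δ :=
  stmt_15_general d δ x y y' hx hy hxy hy'
end

section
/- Fix 0 < r < 1 and let a = 1 - r²/2, δ' = r√(1 - r²/4). For x ∈ S^d \ {N,-N}, define f(x) = ((δ'/√(1-x_d²))·x₀, ..., (δ'/√(1-x_d²))·x_{d-1}, a) (the intersection of the great semicircle from N through x to -N with the boundary of the cap B_{S^d}(N, r)). If x, y ∈ S^d \ {N,-N} with |x_d| < a and ‖x - y‖ ≤ δ, then ‖f(x) - f(y)‖ ≤ 2δ. -/
/-!
Write `u, v` for `x, y` with the last coordinate erased. On the unit sphere `‖u‖ = √(1 - x_d²)`,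
so `f(x) - f(y) = δ' • (u/‖u‖ - v/‖v‖)`. Radial projection to the unit sphere satisfies
`‖u‖ · ‖u/‖u‖ - v/‖v‖‖ ≤ 2‖u - v‖`, and `|x_d| < a` means that `x` lies strictly between the two
caps, i.e. `δ' ≤ ‖u‖`. Hence `‖f(x) - f(y)‖ ≤ 2‖u - v‖ ≤ 2‖x - y‖`.
-/

namespace NormedSpace

variable {V : Type*} [NormedAddCommGroup V] [NormedSpace ℝ V]

lemma norm_normalize_le_one (v : V) : ‖normalize v‖ ≤ 1 := by
  rw [normalize, norm_smul, norm_inv, norm_norm]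
  exact inv_mul_le_one_of_le₀ le_rfl (norm_nonneg v)

lemma norm_mul_norm_normalize_sub_normalize_le (u v : V) :
    ‖u‖ * ‖normalize u - normalize v‖ ≤ 2 * ‖u - v‖ := by
  have hsplit : ‖u‖ • (normalize u - normalize v) = (u - v) + (‖v‖ - ‖u‖) • normalize v := by
    rw [smul_sub, norm_smul_normalize, sub_smul, norm_smul_normalize]
    abel
  calc ‖u‖ * ‖normalize u - normalize v‖ = ‖(u - v) + (‖v‖ - ‖u‖) • normalize v‖ := by
        rw [← hsplit, norm_smul, norm_norm]
    _ ≤ ‖u - v‖ + |‖v‖ - ‖u‖| * ‖normalize v‖ := by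
        grw [norm_add_le, norm_smul, Real.norm_eq_abs]
    _ ≤ ‖u - v‖ + ‖u - v‖ * 1 := by
        gcongr
        · rw [norm_sub_rev u v]
          exact abs_norm_sub_norm_le v u
        · exact norm_normalize_le_one v
    _ = 2 * ‖u - v‖ := by ring

end NormedSpace

namespace EuclideanSpace

variable {ι : Type*} [DecidableEq ι]

def eraseCoord (i : ι) (x : EuclideanSpace ℝ ι) : EuclideanSpace ℝ ι :=
  WithLp.toLp 2 fun j => if j = i then 0 else x j

@[simp] lemma eraseCoord_apply (i j : ι) (x : EuclideanSpace ℝ ι) :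
    eraseCoord i x j = if j = i then 0 else x j := rfl

lemma eraseCoord_sub (i : ι) (x y : EuclideanSpace ℝ ι) :
    eraseCoord i (x - y) = eraseCoord i x - eraseCoord i y := by
  ext j
  by_cases h : j = i <;> simp [h]

variable [Fintype ι]

lemma norm_sq_eq_norm_eraseCoord_sq_add (i : ι) (x : EuclideanSpace ℝ ι) :
    ‖x‖ ^ 2 = ‖eraseCoord i x‖ ^ 2 + x i ^ 2 := by
  have hsplit (j : ι) :
      x j ^ 2 = (if j = i then 0 else x j) ^ 2 + if j = i then x i ^ 2 else 0 := by
    split_ifs with h <;> simp [h]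
  rw [real_norm_sq_eq, Finset.sum_congr rfl fun j _ => hsplit j, Finset.sum_add_distrib,
    Finset.sum_ite_eq', if_pos (Finset.mem_univ i), real_norm_sq_eq]
  rfl

lemma norm_eraseCoord_sub_le (i : ι) (x y : EuclideanSpace ℝ ι) :
    ‖eraseCoord i x - eraseCoord i y‖ ≤ ‖x - y‖ := by
  rw [← eraseCoord_sub]
  have hpyth := norm_sq_eq_norm_eraseCoord_sq_add i (x - y)
  exact le_of_sq_le_sq (by nlinarith [sq_nonneg ((x - y) i)]) (norm_nonneg _)

lemma sqrt_one_sub_sq_eq_norm_eraseCoord {x : EuclideanSpace ℝ ι} (hx : ‖x‖ = 1) (i : ι) :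
    √(1 - x i ^ 2) = ‖eraseCoord i x‖ := by
  have hpyth := norm_sq_eq_norm_eraseCoord_sq_add i x
  rw [hx, one_pow] at hpyth
  rw [hpyth, add_sub_cancel_right, Real.sqrt_sq (norm_nonneg _)]

end EuclideanSpace

/-- `r√(1 - r²/4)` and `1 - r²/2` are the radius and the height of the boundary circle of the
cap `B(N, r)`, so `(r√(1 - r²/4))² = 1 - (1 - r²/2)²`. -/
lemma abs_mul_sqrt_one_sub_sq_div_four_le_sqrt {r t : ℝ} (h : |t| < 1 - r ^ 2 / 2) :
    |r * √(1 - r ^ 2 / 4)| ≤ √(1 - t ^ 2) := by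
  have hr : r ^ 2 < 2 := by linarith [abs_nonneg t]
  have ht : t ^ 2 < (1 - r ^ 2 / 2) ^ 2 := by
    rw [← sq_abs]
    exact pow_lt_pow_left₀ h (abs_nonneg t) two_ne_zero
  rw [Real.le_sqrt (abs_nonneg _) (by nlinarith), sq_abs, mul_pow, Real.sq_sqrt (by linarith)]
  nlinarith

open EuclideanSpace NormedSpace in
theorem stmt_16_general (d : ℕ) (r δ : ℝ)
    (x y fx fy : EuclideanSpace ℝ (Fin (d + 1)))
    (hx : ‖x‖ = 1) (hy : ‖y‖ = 1)
    (hxa : |x (Fin.last d)| < 1 - r ^ 2 / 2)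
    (hxy : ‖x - y‖ ≤ δ)
    (hfx : ∀ i : Fin (d + 1), fx i =
      if i = Fin.last d then 1 - r ^ 2 / 2
      else r * Real.sqrt (1 - r ^ 2 / 4) /
        Real.sqrt (1 - x (Fin.last d) ^ 2) * x i)
    (hfy : ∀ i : Fin (d + 1), fy i =
      if i = Fin.last d then 1 - r ^ 2 / 2
      else r * Real.sqrt (1 - r ^ 2 / 4) /
        Real.sqrt (1 - y (Fin.last d) ^ 2) * y i) :
    ‖fx - fy‖ ≤ 2 * δ := by
  set u := eraseCoord (Fin.last d) x
  set v := eraseCoord (Fin.last d) y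
  set δ' := r * √(1 - r ^ 2 / 4)
  have hf : fx - fy = δ' • (NormedSpace.normalize u - NormedSpace.normalize v) := by
    ext i
    rw [PiLp.sub_apply, hfx, hfy, sqrt_one_sub_sq_eq_norm_eraseCoord hx,
      sqrt_one_sub_sq_eq_norm_eraseCoord hy]
    by_cases hi : i = Fin.last d
    · simp [hi, u, v, NormedSpace.normalize]
    · simp only [hi, ↓reduceIte, NormedSpace.normalize, PiLp.smul_apply, PiLp.sub_apply,
        eraseCoord_apply, smul_eq_mul, u, v]
      ring
  calc ‖fx - fy‖ = |δ'| * ‖NormedSpace.normalize u - NormedSpace.normalize v‖ := by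
        rw [hf, norm_smul, Real.norm_eq_abs]
    _ ≤ ‖u‖ * ‖NormedSpace.normalize u - NormedSpace.normalize v‖ := by
        gcongr
        rw [← sqrt_one_sub_sq_eq_norm_eraseCoord hx]
        exact abs_mul_sqrt_one_sub_sq_div_four_le_sqrt hxa
    _ ≤ 2 * ‖u - v‖ := norm_mul_norm_normalize_sub_normalize_le u v
    _ ≤ 2 * δ := by grw [norm_eraseCoord_sub_le, hxy]

/-- Fix `0 < r < 1`, `a = 1 - r²/2`, `δ' = r√(1 - r²/4)`. For a unit vector
`z` distinct from `±N`, let `f(z)` be the intersection of the great semicircle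
from `N` through `z` with the boundary of the cap `B_{S^d}(N,r)`; explicitly
`f(z)_i = (δ'/√(1-z_d²))·z_i` for `i < d` and `f(z)_d = a`. If `x, y` are unit
vectors distinct from `±N` with `|x_d| < a` and `‖x - y‖ ≤ δ`, then
`‖f(x) - f(y)‖ ≤ 2δ`. -/
theorem stmt_16 (d : ℕ) (r δ : ℝ) (hr0 : 0 < r) (hr1 : r < 1)
    (x y fx fy : EuclideanSpace ℝ (Fin (d + 1)))
    (hx : ‖x‖ = 1) (hy : ‖y‖ = 1)
    (hxa : |x (Fin.last d)| < 1 - r ^ 2 / 2)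
    (hyp : |y (Fin.last d)| ≠ 1)
    (hxy : ‖x - y‖ ≤ δ)
    (hfx : ∀ i : Fin (d + 1), fx i =
      if i = Fin.last d then 1 - r ^ 2 / 2
      else r * Real.sqrt (1 - r ^ 2 / 4) /
        Real.sqrt (1 - x (Fin.last d) ^ 2) * x i)
    (hfy : ∀ i : Fin (d + 1), fy i =
      if i = Fin.last d then 1 - r ^ 2 / 2
      else r * Real.sqrt (1 - r ^ 2 / 4) /
        Real.sqrt (1 - y (Fin.last d) ^ 2) * y i) :
    ‖fx - fy‖ ≤ 2 * δ :=
  stmt_16_general d r δ x y fx fy hx hy hxa hxy hfx hfy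
end

section
/- Let d ≥ 2 and 0 < ε < 1 with r = 8√ε/√(3(4 - λ_{d-1}²)) < 1, where λ_{d-1} < 2 is the facet-projection diameter constant for S^{d-1}. For any x ∈ S^d, the induced subgraph of the Borsuk graph Bor^d(ε) on the vertex set S^d \ B_{S^d}(x, r) has chromatic number at most d + 1. -/
open RealInnerProductSpace Module

set_option maxHeartbeats 1000000 in
/-- Let `d ≥ 2` and let `lam < 2` be the facet-projection diameter constant
for `S^{d-1}`: for every radius `ρ > 0`, the sphere of radius `ρ` in `ℝ^d`
admits a `(d+1)`-coloring with monochromatic diameter at most `lam·ρ`. Let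
`0 < ε < 1` with `r = 8√ε/√(3(4 - lam²)) < 1`. Then for any `x ∈ S^d`, the
induced subgraph of `Bor^d(ε)` on `S^d \ B_{S^d}(x,r)` is `(d+1)`-colorable. -/
theorem stmt_17 (d : ℕ) (hd : 2 ≤ d) (lam : ℝ) (hlam2 : lam < 2)
    (hlam : ∀ ρ : ℝ, 0 < ρ →
      ∃ col : EuclideanSpace ℝ (Fin d) → Fin (d + 1),
        ∀ u v : EuclideanSpace ℝ (Fin d), ‖u‖ = ρ → ‖v‖ = ρ →
          col u = col v → ‖u - v‖ ≤ lam * ρ)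
    (ε : ℝ) (hε0 : 0 < ε) (hε1 : ε < 1)
    (hr1 : 8 * Real.sqrt ε / Real.sqrt (3 * (4 - lam ^ 2)) < 1)
    (x : EuclideanSpace ℝ (Fin (d + 1))) (hx : ‖x‖ = 1) :
    ∃ c : EuclideanSpace ℝ (Fin (d + 1)) → Fin (d + 1),
      ∀ y z : EuclideanSpace ℝ (Fin (d + 1)), ‖y‖ = 1 → ‖z‖ = 1 →
        ‖x - y‖ > 8 * Real.sqrt ε / Real.sqrt (3 * (4 - lam ^ 2)) →
        ‖x - z‖ > 8 * Real.sqrt ε / Real.sqrt (3 * (4 - lam ^ 2)) →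
        ‖y - z‖ > 2 - ε → c y ≠ c z := by
  classical
  obtain ⟨col, colprop⟩ := hlam 1 one_pos
  -- lam is nonnegative
  have hlam0 : 0 ≤ lam := by
    have hu : ‖(EuclideanSpace.single (⟨0, by omega⟩ : Fin d) (1:ℝ))‖ = 1 := by
      rw [EuclideanSpace.norm_single]; norm_num
    have h := colprop _ _ hu hu rfl
    simp at h
    linarith only [h]
  have hD : 0 < 4 - lam ^ 2 := by
    have h := mul_lt_mul' hlam2.le hlam2 hlam0 two_pos
    linarith only [h]
  set r := 8 * Real.sqrt ε / Real.sqrt (3 * (4 - lam ^ 2)) with hrdef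
  have hsD : 0 < Real.sqrt (3 * (4 - lam ^ 2)) := Real.sqrt_pos.mpr (by linarith)
  have hrpos : 0 < r := by
    have h1 : 0 < Real.sqrt ε := Real.sqrt_pos.mpr hε0
    exact div_pos (by linarith) hsD
  have hr2 : r ^ 2 * (3 * (4 - lam ^ 2)) = 64 * ε := by
    rw [hrdef, div_pow, mul_pow, Real.sq_sqrt hε0.le,
      Real.sq_sqrt (by linarith : (0:ℝ) ≤ 3 * (4 - lam ^ 2)),
      div_mul_cancel₀ _ (by positivity : (3 * (4 - lam ^ 2)) ≠ 0)]
    norm_num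
  have he16 : 16 * ε / 3 ≤ r ^ 2 := by linarith [hr2, sq_nonneg (r * lam)]
  have hrsq1 : r ^ 2 < 1 := by
    have h := mul_pos (show (0:ℝ) < 1 - r by linarith only [hr1])
      (show (0:ℝ) < 1 + r by linarith only [hrpos])
    linarith only [h]
  haveI : Fact (finrank ℝ (EuclideanSpace ℝ (Fin (d + 1))) = d + 1) :=
    ⟨finrank_euclideanSpace_fin⟩
  have hx0 : x ≠ 0 := by
    intro h; rw [h, norm_zero] at hx; norm_num at hx
  let φ := (OrthonormalBasis.fromOrthogonalSpanSingleton (𝕜 := ℝ) d hx0).repr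
  have hmem : ∀ w : EuclideanSpace ℝ (Fin (d + 1)),
      w - ⟪x, w⟫ • x ∈ (ℝ ∙ x)ᗮ := by
    intro w
    rw [Submodule.mem_orthogonal_singleton_iff_inner_right]
    rw [inner_sub_right, real_inner_smul_right, real_inner_self_eq_norm_sq, hx]
    ring
  refine ⟨fun w => col (φ (‖w - ⟪x, w⟫ • x‖⁻¹ •
      (⟨w - ⟪x, w⟫ • x, hmem w⟩ : (ℝ ∙ x)ᗮ))), ?_⟩
  intro y z hy hz hxy hxz hyz heq
  set a := ⟪x, y⟫ with hadef
  set b := ⟪x, z⟫ with hbdef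
  set t := ⟪y, z⟫ with htdef
  -- basic inner product bounds
  have hma : -1 ≤ a := by
    have h := abs_real_inner_le_norm x y
    rw [hx, hy] at h
    have h2 := abs_le.mp (by linarith only [h] : |a| ≤ 1)
    linarith only [h2.1]
  have hmb : -1 ≤ b := by
    have h := abs_real_inner_le_norm x z
    rw [hx, hz] at h
    have h2 := abs_le.mp (by linarith only [h] : |b| ≤ 1)
    linarith only [h2.1]
  have hxy2 : ‖x - y‖ ^ 2 = 2 - 2 * a := by
    rw [norm_sub_sq_real, hx, hy]; ring
  have hxz2 : ‖x - z‖ ^ 2 = 2 - 2 * b := by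
    rw [norm_sub_sq_real, hx, hz]; ring
  have ha : a < 1 - r ^ 2 / 2 := by
    have h := pow_lt_pow_left₀ hxy hrpos.le (two_ne_zero)
    rw [hxy2] at h; linarith only [h]
  have hb : b < 1 - r ^ 2 / 2 := by
    have h := pow_lt_pow_left₀ hxz hrpos.le (two_ne_zero)
    rw [hxz2] at h; linarith only [h]
  have ht : t < -1 + 2 * ε := by
    have h := pow_lt_pow_left₀ hyz (by linarith : (0:ℝ) ≤ 2 - ε) (two_ne_zero)
    rw [norm_sub_sq_real, hy, hz] at h
    linarith only [h, sq_nonneg ε]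
  -- y ≠ -x and z ≠ -x
  have hya : -1 < a := by
    by_contra h
    have haa : a = -1 := le_antisymm (not_lt.mp h) hma
    have h0 : ‖y + x‖ ^ 2 = 0 := by
      rw [norm_add_sq_real, hx, hy, real_inner_comm, ← hadef, haa]; ring
    have h1 : y + x = 0 := by
      have := pow_eq_zero_iff (n := 2) two_ne_zero |>.mp (by rw [← h0] : ‖y + x‖ ^ 2 = 0)
      exact norm_eq_zero.mp this
    have hyx : y = -x := by
      have := eq_neg_of_add_eq_zero_left h1; rw [this]
    have htb : t = -b := by
      rw [htdef, hyx, inner_neg_left, hbdef]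
    linarith only [htb, hb, ht, he16, hε0]
  have hzb : -1 < b := by
    by_contra h
    have hbb : b = -1 := le_antisymm (not_lt.mp h) hmb
    have h0 : ‖z + x‖ ^ 2 = 0 := by
      rw [norm_add_sq_real, hx, hz, real_inner_comm, ← hbdef, hbb]; ring
    have h1 : z + x = 0 := by
      have := pow_eq_zero_iff (n := 2) two_ne_zero |>.mp (by rw [← h0] : ‖z + x‖ ^ 2 = 0)
      exact norm_eq_zero.mp this
    have hzx : z = -x := by
      have := eq_neg_of_add_eq_zero_left h1; rw [this]
    have hta : t = -a := by
      rw [htdef, hzx, inner_neg_right, hadef, real_inner_comm]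
    linarith only [hta, ha, ht, he16, hε0]
  -- norms of projections
  have hiy : ⟪y, a • x⟫ = a * a := by
    rw [real_inner_smul_right, real_inner_comm, ← hadef]
  have hiz : ⟪z, b • x⟫ = b * b := by
    rw [real_inner_smul_right, real_inner_comm, ← hbdef]
  have hu2 : ‖y - a • x‖ ^ 2 = 1 - a ^ 2 := by
    rw [norm_sub_sq_real, hiy, hy, norm_smul, hx, Real.norm_eq_abs, mul_one, sq_abs]; ring
  have hv2 : ‖z - b • x‖ ^ 2 = 1 - b ^ 2 := by
    rw [norm_sub_sq_real, hiz, hz, norm_smul, hx, Real.norm_eq_abs, mul_one, sq_abs]; ring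
  have hupos : 0 < ‖y - a • x‖ := by
    have hne : ‖y - a • x‖ ≠ 0 := by
      intro h0; rw [h0] at hu2
      have h2 := mul_pos (show (0:ℝ) < 1 + a by linarith only [hya])
        (show (0:ℝ) < 1 - a by linarith only [ha, pow_pos hrpos 2])
      linarith only [hu2, h2]
    exact (norm_nonneg _).lt_of_ne' hne
  have hvpos : 0 < ‖z - b • x‖ := by
    have hne : ‖z - b • x‖ ≠ 0 := by
      intro h0; rw [h0] at hv2
      have h2 := mul_pos (show (0:ℝ) < 1 + b by linarith only [hzb])
        (show (0:ℝ) < 1 - b by linarith only [hb, pow_pos hrpos 2])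
      linarith only [hv2, h2]
    exact (norm_nonneg _).lt_of_ne' hne
  have hinnerwyz : ⟪y - a • x, z - b • x⟫ = t - a * b := by
    simp only [inner_sub_left, inner_sub_right, real_inner_smul_left, real_inner_smul_right,
      real_inner_self_eq_norm_sq, hx, one_pow, mul_one]
    rw [real_inner_comm x y, ← hadef, ← hbdef, ← htdef]
    ring
  -- norms of the normalized projections
  have hYn : ‖φ (‖y - a • x‖⁻¹ • (⟨y - a • x, hmem y⟩ : (ℝ ∙ x)ᗮ))‖ = 1 := by
    rw [LinearIsometryEquiv.norm_map, norm_smul, Real.norm_eq_abs,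
      abs_of_pos (inv_pos.mpr hupos)]
    exact inv_mul_cancel₀ hupos.ne'
  have hZn : ‖φ (‖z - b • x‖⁻¹ • (⟨z - b • x, hmem z⟩ : (ℝ ∙ x)ᗮ))‖ = 1 := by
    rw [LinearIsometryEquiv.norm_map, norm_smul, Real.norm_eq_abs,
      abs_of_pos (inv_pos.mpr hvpos)]
    exact inv_mul_cancel₀ hvpos.ne'
  have hle := colprop _ _ hYn hZn heq
  rw [mul_one] at hle
  -- distance between the normalized projections
  have hny1 : ‖‖y - a • x‖⁻¹ • (y - a • x)‖ = 1 := by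
    rw [norm_smul, Real.norm_eq_abs, abs_of_pos (inv_pos.mpr hupos)]
    exact inv_mul_cancel₀ hupos.ne'
  have hnz1 : ‖‖z - b • x‖⁻¹ • (z - b • x)‖ = 1 := by
    rw [norm_smul, Real.norm_eq_abs, abs_of_pos (inv_pos.mpr hvpos)]
    exact inv_mul_cancel₀ hvpos.ne'
  have hdist : ‖φ (‖y - a • x‖⁻¹ • (⟨y - a • x, hmem y⟩ : (ℝ ∙ x)ᗮ)) -
      φ (‖z - b • x‖⁻¹ • (⟨z - b • x, hmem z⟩ : (ℝ ∙ x)ᗮ))‖ ^ 2 =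
      2 - 2 * (‖y - a • x‖⁻¹ * (‖z - b • x‖⁻¹ * (t - a * b))) := by
    have h0 : ‖φ (‖y - a • x‖⁻¹ • (⟨y - a • x, hmem y⟩ : (ℝ ∙ x)ᗮ)) -
        φ (‖z - b • x‖⁻¹ • (⟨z - b • x, hmem z⟩ : (ℝ ∙ x)ᗮ))‖ =
        ‖‖y - a • x‖⁻¹ • (y - a • x) - ‖z - b • x‖⁻¹ • (z - b • x)‖ := by
      rw [← map_sub, LinearIsometryEquiv.norm_map]
      rfl
    rw [h0, norm_sub_sq_real, hny1, hnz1, real_inner_smul_left, real_inner_smul_right,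
      hinnerwyz]
    ring
  have hsq : 2 - 2 * (‖y - a • x‖⁻¹ * (‖z - b • x‖⁻¹ * (t - a * b))) ≤ lam ^ 2 := by
    rw [← hdist]
    exact pow_le_pow_left₀ (norm_nonneg _) hle 2
  set u := ‖y - a • x‖ with hudef
  set v := ‖z - b • x‖ with hvdef
  have hmain : (1 - lam ^ 2 / 2) * (u * v) ≤ t - a * b := by
    have h9 : (1 - lam ^ 2 / 2) ≤ u⁻¹ * (v⁻¹ * (t - a * b)) := by linarith only [hsq]
    have h10 := mul_le_mul_of_nonneg_left h9 (mul_pos hupos hvpos).le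
    have h11 : (u * v) * (u⁻¹ * (v⁻¹ * (t - a * b))) = t - a * b := by
      field_simp
    linarith only [h10, h11]
  have habn : 0 ≤ 1 + a * b := by
    have k1 := mul_nonneg (show (0:ℝ) ≤ 1 + a by linarith only [hma])
      (show (0:ℝ) ≤ 1 + b by linarith only [hmb])
    have k2 := mul_nonneg (show (0:ℝ) ≤ 1 - a by linarith only [ha, pow_pos hrpos 2])
      (show (0:ℝ) ≤ 1 - b by linarith only [hb, pow_pos hrpos 2])
    linarith only [k1, k2]
  have huvle : u * v ≤ 1 + a * b := by
    have h3 : (u * v) ^ 2 ≤ (1 + a * b) ^ 2 := by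
      rw [mul_pow, hu2, hv2]
      linarith only [sq_nonneg (a + b)]
    nlinarith only [h3, habn, mul_pos hupos hvpos]
  have hab : -(1 - r ^ 2 / 2) ≤ a * b := by
    rcases le_or_gt 0 b with hb0 | hb0
    · have k := mul_nonneg (show (0:ℝ) ≤ 1 + a by linarith only [hma]) hb0
      linarith only [k, hb]
    · have k1 := mul_nonneg (show (0:ℝ) ≤ (1 - r ^ 2 / 2) - a by linarith only [ha])
        (show (0:ℝ) ≤ -b by linarith only [hb0])
      have k2 := mul_nonneg (show (0:ℝ) ≤ 1 + b by linarith only [hmb])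
        (show (0:ℝ) ≤ 1 - r ^ 2 / 2 by linarith only [hrsq1])
      linarith only [k1, k2]
  rcases le_or_gt 0 (1 - lam ^ 2 / 2) with hs | hs
  · have h12 : 0 ≤ (1 - lam ^ 2 / 2) * (u * v) :=
      mul_nonneg hs (mul_pos hupos hvpos).le
    linarith only [h12, hmain, hab, ht, he16, hε0]
  · have h5 : (1 - lam ^ 2 / 2) * (1 + a * b) ≤ (1 - lam ^ 2 / 2) * (u * v) :=
      mul_le_mul_of_nonpos_left huvle hs.le
    have h7 := mul_le_mul_of_nonneg_left hab (show (0:ℝ) ≤ 2 - lam ^ 2 / 2 by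
      linarith only [hD])
    have h8 : (1 - lam ^ 2 / 2) * (1 + a * b) ≤ t - a * b := le_trans h5 hmain
    have h8' : t ≥ 1 + 2 * (a * b) - lam ^ 2 / 2 - lam ^ 2 / 2 * (a * b) := by linarith only [h8]
    have h7' : 2 * (a * b) - lam ^ 2 / 2 * (a * b) ≥
        -2 + r ^ 2 + lam ^ 2 / 2 - lam ^ 2 / 4 * r ^ 2 := by linarith only [h7]
    have hr2' : 12 * r ^ 2 - 3 * (lam ^ 2 / 4 * r ^ 2) * 4 = 64 * ε := by linarith only [hr2]
    linarith only [h8', h7', hr2', ht, hε0]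
end

section
/- Let ε(n) = C(log n / n)^{2/d} with C ≥ (64/3)·(3π²/4)^{1/d}, and let A_d = 2·3^d·(d+1)·4^d, B_d = (1/(4π))·(√3/8)^{d-1}. Then N(1-c)ⁿ → 0 as n → ∞, where N ≤ A_d/ε^{d/2} and c = B_d·ε^{d/2}; explicitly, (A_d·n/(C^{d/2} log n))·exp(-B_d·C^{d/2}·log n) → 0 since B_d·C^{d/2} ≥ 1. -/
open Filter Real

/-- The quantitative estimate in the lower-bound theorem: for `d ≥ 1` and
`C ≥ (64/3)(3π²/4)^{1/d}`, with `ε(n) = C (log n / n)^{2/d}`,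
`A_d = 2·3^d·(d+1)·4^d` and `B_d = (1/(4π))(√3/8)^{d-1}`, the bound
`N (1-c)^n ≤ (A_d/ε^{d/2}) (1 - B_d ε^{d/2})^n` tends to `0` as `n → ∞`. -/
theorem stmt_19 (d : ℕ) (hd : 1 ≤ d) (C : ℝ)
    (hC : C ≥ (64 / 3) * ((3 * Real.pi ^ 2) / 4) ^ ((1 : ℝ) / d))
    (ε : ℕ → ℝ) (hε : ∀ n, ε n = C * (Real.log n / n) ^ ((2 : ℝ) / d))
    (A B : ℝ) (hA : A = 2 * 3 ^ d * (d + 1) * 4 ^ d)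
    (hB : B = (1 / (4 * Real.pi)) * (Real.sqrt 3 / 8) ^ (d - 1)) :
    Tendsto (fun n : ℕ =>
        (A / (ε n) ^ ((d : ℝ) / 2)) * (1 - B * (ε n) ^ ((d : ℝ) / 2)) ^ n)
      atTop (nhds 0) := by
  have hπ := Real.pi_pos
  have hd0 : (d : ℝ) ≠ 0 := Nat.cast_ne_zero.mpr (by omega)
  have hCpos : 0 < C := lt_of_lt_of_le (by positivity) hC
  have hA0 : 0 < A := by rw [hA]; positivity
  have hs : (0:ℝ) < Real.sqrt 3 := Real.sqrt_pos.mpr (by norm_num)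
  have hs2 : Real.sqrt 3 ^ 2 = 3 := Real.sq_sqrt (by norm_num)
  have hB0 : 0 < B := by rw [hB]; positivity
  set K := B * C ^ ((d : ℝ) / 2) with hK
  have hCd : 0 < C ^ ((d:ℝ)/2) := Real.rpow_pos_of_pos hCpos _
  have hK0 : 0 < K := mul_pos hB0 hCd
  -- Step 1 : K ≥ 1
  have hK1 : 1 ≤ K := by
    have h1 : ((64/3) * ((3 * Real.pi ^ 2) / 4) ^ ((1:ℝ)/d)) ^ ((d:ℝ)/2) ≤ C ^ ((d:ℝ)/2) :=
      Real.rpow_le_rpow (by positivity) hC (by positivity)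
    have e2 : ((64:ℝ)/3) ^ ((d:ℝ)/2) = (8 / Real.sqrt 3) ^ d := by
      rw [show ((64:ℝ)/3) = (8 / Real.sqrt 3) ^ (2:ℕ) by rw [div_pow, hs2]; norm_num,
        ← Real.rpow_natCast (8 / Real.sqrt 3) 2, ← Real.rpow_mul (by positivity),
        show ((2:ℕ):ℝ) * ((d:ℝ)/2) = (d:ℕ) by push_cast; ring, Real.rpow_natCast]
    have e3 : ((3 * Real.pi ^ 2) / 4 : ℝ) ^ (((1:ℝ)/d) * ((d:ℝ)/2))
        = Real.sqrt 3 * Real.pi / 2 := by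
      rw [show ((1:ℝ)/d) * ((d:ℝ)/2) = 1/2 by field_simp, ← Real.sqrt_eq_rpow,
        show ((3 * Real.pi ^ 2) / 4 : ℝ) = (Real.sqrt 3 * Real.pi / 2) ^ 2 by
          rw [div_pow, mul_pow, hs2]; ring,
        Real.sqrt_sq (by positivity)]
    have h2 : ((64/3 : ℝ) * ((3 * Real.pi ^ 2) / 4) ^ ((1:ℝ)/d)) ^ ((d:ℝ)/2)
        = (8 / Real.sqrt 3) ^ d * (Real.sqrt 3 * Real.pi / 2) := by
      rw [Real.mul_rpow (by norm_num) (by positivity), ← Real.rpow_mul (by positivity), e2, e3]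
    have h3 : B * ((8 / Real.sqrt 3) ^ d * (Real.sqrt 3 * Real.pi / 2)) = 1 := by
      have hsplit : (8 / Real.sqrt 3) ^ d = (8 / Real.sqrt 3) ^ (d - 1) * (8 / Real.sqrt 3) := by
        rw [← pow_succ, Nat.sub_add_cancel hd]
      have hcancel : (Real.sqrt 3 / 8) ^ (d - 1) * (8 / Real.sqrt 3) ^ (d - 1) = 1 := by
        rw [← mul_pow, show Real.sqrt 3 / 8 * (8 / Real.sqrt 3) = 1 by field_simp, one_pow]
      calc B * ((8 / Real.sqrt 3) ^ d * (Real.sqrt 3 * Real.pi / 2))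
          = ((Real.sqrt 3 / 8) ^ (d - 1) * (8 / Real.sqrt 3) ^ (d - 1)) *
            (1 / (4 * Real.pi) * (8 / Real.sqrt 3) * (Real.sqrt 3 * Real.pi / 2)) := by
            rw [hB, hsplit]; ring
        _ = 1 := by rw [hcancel, one_mul]; field_simp; ring
    calc (1:ℝ) = B * ((8 / Real.sqrt 3) ^ d * (Real.sqrt 3 * Real.pi / 2)) := h3.symm
      _ ≤ B * C ^ ((d:ℝ)/2) := by
          apply mul_le_mul_of_nonneg_left _ hB0.le
          rw [← h2]; exact h1
  -- Step 2 : eventual bounds and squeeze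
  have hlogn : Tendsto (fun n : ℕ => Real.log n) atTop atTop :=
    Real.tendsto_log_atTop.comp tendsto_natCast_atTop_atTop
  have hg : Tendsto (fun n : ℕ => A / (C ^ ((d:ℝ)/2) * Real.log n)) atTop (nhds 0) :=
    tendsto_const_nhds.div_atTop (hlogn.const_mul_atTop hCd)
  have hldn : Tendsto (fun n : ℕ => Real.log n / n) atTop (nhds 0) :=
    (Real.isLittleO_log_id_atTop.tendsto_div_nhds_zero).comp tendsto_natCast_atTop_atTop
  have hev : ∀ᶠ n : ℕ in atTop, 1 ≤ Real.log n ∧ K * (Real.log n / n) ≤ 1 := by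
    have h2' : Tendsto (fun n : ℕ => K * (Real.log n / n)) atTop (nhds 0) := by
      simpa using hldn.const_mul K
    filter_upwards [hlogn.eventually_ge_atTop 1,
      h2'.eventually (eventually_le_nhds (by norm_num : (0:ℝ) < 1))] with n h1 h2
    exact ⟨h1, h2⟩
  have key : ∀ n : ℕ, 1 ≤ Real.log n → K * (Real.log n / n) ≤ 1 →
      0 ≤ (A / (ε n) ^ ((d : ℝ) / 2)) * (1 - B * (ε n) ^ ((d : ℝ) / 2)) ^ n ∧
      (A / (ε n) ^ ((d : ℝ) / 2)) * (1 - B * (ε n) ^ ((d : ℝ) / 2)) ^ n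
        ≤ A / (C ^ ((d:ℝ)/2) * Real.log n) := by
    intro n hl ht1
    have hn0 : n ≠ 0 := by rintro rfl; simp at hl; linarith
    have hnpos : (0:ℝ) < n := by exact_mod_cast Nat.pos_of_ne_zero hn0
    have hn1 : (1:ℝ) ≤ n := by exact_mod_cast Nat.one_le_iff_ne_zero.mpr hn0
    have hlpos : (0:ℝ) < Real.log n := lt_of_lt_of_le one_pos hl
    have hx : (0:ℝ) ≤ Real.log n / n := by positivity
    have hrw : (ε n) ^ ((d : ℝ) / 2) = C ^ ((d:ℝ)/2) * (Real.log n / n) := by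
      rw [hε n, Real.mul_rpow hCpos.le (Real.rpow_nonneg hx _), ← Real.rpow_mul hx,
        show ((2:ℝ)/d) * ((d:ℝ)/2) = 1 by field_simp, Real.rpow_one]
    set t := K * (Real.log n / n) with htdef
    have hBrw : B * (ε n) ^ ((d : ℝ) / 2) = t := by rw [hrw, htdef, hK]; ring
    have ht0 : 0 ≤ t := by positivity
    have h1t : (0:ℝ) ≤ 1 - t := by linarith
    have hfac : 0 < A / (C ^ ((d:ℝ)/2) * (Real.log n / n)) := by positivity
    constructor
    · rw [hBrw, hrw]; positivity
    · rw [hBrw, hrw]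
      have hchain : (1 - t) ^ n ≤ ((n:ℝ))⁻¹ := by
        calc (1 - t) ^ n ≤ Real.exp (-t) ^ n := by
              apply pow_le_pow_left₀ h1t _ n
              have := Real.add_one_le_exp (-t); linarith
          _ = Real.exp ((n:ℝ) * -t) := (Real.exp_nat_mul _ n).symm
          _ = (n:ℝ) ^ (-K) := by
              rw [Real.rpow_def_of_pos hnpos]
              congr 1
              rw [htdef]; field_simp
          _ ≤ (n:ℝ) ^ (-1:ℝ) :=
              Real.rpow_le_rpow_of_exponent_le hn1 (by linarith)
          _ = ((n:ℝ))⁻¹ := Real.rpow_neg_one _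
      calc A / (C ^ ((d:ℝ)/2) * (Real.log n / n)) * (1 - t) ^ n
          ≤ A / (C ^ ((d:ℝ)/2) * (Real.log n / n)) * ((n:ℝ))⁻¹ :=
            mul_le_mul_of_nonneg_left hchain hfac.le
        _ = A / (C ^ ((d:ℝ)/2) * Real.log n) := by
            field_simp
  apply squeeze_zero' (t₀ := atTop)
    (g := fun n : ℕ => A / (C ^ ((d:ℝ)/2) * Real.log n)) ?_ ?_ hg
  · filter_upwards [hev] with n hn using (key n hn.1 hn.2).1
  · filter_upwards [hev] with n hn using (key n hn.1 hn.2).2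
end
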